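/- Let γ ∈ (0,1], k, l ∈ {−1,1}, and let b satisfy kb ∈ (1, r^s). Let (C,S) be the solution of the unperturbed system with C(0) = b, S(0) = l. Then α(φ) = C'(φ)(S(φ) − l) − (C(φ) − k)S'(φ) > 0 for all φ ∈ ℝ. -/

import Mathlib

/-!
Along a solution the energy `V(C) + γ V(S)`, with `V x = x⁴/4 - x²/2 ≥ -1/4`, is conserved.
Starting at `(b, l)` with `1 < (kb)² < 1 + √γ` gives `-(1 + γ)/4 < E < -1/4`, and `γ ≤ 1` puts the
axes `C = 0`, `S = 0` at energy `≥ -1/4`; so `C` and `S` keep the signs of `k` and `l`, and the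
orbit never reaches the equilibrium `(k, l)` of energy `-(1 + γ)/4`. Since
`u³ - u = u (u - k)(u + k)` for `k² = 1`, both terms of
`α = γ (S - l)(S³ - S) + (C - k)(C³ - C)` are then nonnegative and one of them is positive.
-/

open Set

namespace DoubleWell

noncomputable def V (x : ℝ) : ℝ := x ^ 4 / 4 - x ^ 2 / 2

lemma V_eq (x : ℝ) : V x = ((x ^ 2 - 1) ^ 2 - 1) / 4 := by
  unfold V; ring

lemma neg_quarter_le_V (x : ℝ) : -1 / 4 ≤ V x := by
  rw [V_eq]; nlinarith [sq_nonneg (x ^ 2 - 1)]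

lemma neg_quarter_lt_V {x : ℝ} (hx : x ^ 2 ≠ 1) : -1 / 4 < V x := by
  rw [V_eq]; linarith [sq_pos_of_ne_zero (sub_ne_zero.2 hx)]

lemma V_of_sq_eq_one {x : ℝ} (hx : x ^ 2 = 1) : V x = -1 / 4 := by
  rw [V_eq, hx]; norm_num

lemma V_zero : V 0 = 0 := by
  norm_num [V]

lemma V_lt_of_sq_lt {γ x : ℝ} (hγ : 0 ≤ γ) (h₁ : 1 < x ^ 2) (h₂ : x ^ 2 < 1 + √γ) :
    V x < (γ - 1) / 4 := by
  have hsq : (x ^ 2 - 1) ^ 2 < √γ ^ 2 := by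
    gcongr
    linarith
  rw [Real.sq_sqrt hγ] at hsq
  rw [V_eq]; linarith

noncomputable def energy (γ x y : ℝ) : ℝ := V x + γ * V y

lemma hasDerivAt_V (x : ℝ) : HasDerivAt V (x ^ 3 - x) x :=
  (((hasDerivAt_pow 4 x).div_const 4).sub ((hasDerivAt_pow 2 x).div_const 2)).congr_deriv
    (by norm_num)

theorem energy_eq_of_hasDerivAt {γ : ℝ} {C S : ℝ → ℝ}
    (hC : ∀ φ, HasDerivAt C (γ * (S φ ^ 3 - S φ)) φ)
    (hS : ∀ φ, HasDerivAt S (-(C φ ^ 3 - C φ)) φ) (φ ψ : ℝ) :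
    energy γ (C φ) (S φ) = energy γ (C ψ) (S ψ) := by
  have hE : ∀ φ, HasDerivAt (fun φ => energy γ (C φ) (S φ)) 0 φ := fun φ =>
    (((hasDerivAt_V _).comp φ (hC φ)).add
      (((hasDerivAt_V _).comp φ (hS φ)).const_mul γ)).congr_deriv (by ring)
  exact is_const_of_deriv_eq_zero (fun φ => (hE φ).differentiableAt) (fun φ => (hE φ).deriv) φ ψ

lemma energy_sq_eq_one {γ k l : ℝ} (hk : k ^ 2 = 1) (hl : l ^ 2 = 1) :
    energy γ k l = -(1 + γ) / 4 := by
  rw [energy, V_of_sq_eq_one hk, V_of_sq_eq_one hl]; ring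

lemma neg_quarter_le_energy_zero_left {γ : ℝ} (hγ₀ : 0 ≤ γ) (hγ₁ : γ ≤ 1) (y : ℝ) :
    -1 / 4 ≤ energy γ 0 y := by
  rw [energy, V_zero]; nlinarith [neg_quarter_le_V y]

lemma neg_quarter_le_energy_zero_right (γ x : ℝ) : -1 / 4 ≤ energy γ x 0 := by
  simpa [energy, V_zero] using neg_quarter_le_V x

end DoubleWell

open DoubleWell

lemma pos_of_continuous_of_ne_zero {f : ℝ → ℝ} (hf : Continuous f) (h0 : 0 < f 0)
    (hne : ∀ x, f x ≠ 0) (x : ℝ) : 0 < f x := by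
  by_contra! hx
  obtain ⟨y, hy⟩ := intermediate_value_univ x 0 hf ⟨hx, h0.le⟩
  exact hne y hy

lemma cube_sub_self_eq {k : ℝ} (hk : k ^ 2 = 1) (u : ℝ) :
    (u - k) * (u ^ 3 - u) = (u - k) ^ 2 * (u ^ 2 + k * u) := by
  linear_combination (u - k) * u * hk

lemma sub_mul_cube_sub_self_nonneg {k u : ℝ} (hk : k ^ 2 = 1) (hu : 0 < k * u) :
    0 ≤ (u - k) * (u ^ 3 - u) := by
  rw [cube_sub_self_eq hk]; positivity

lemma sub_mul_cube_sub_self_pos {k u : ℝ} (hk : k ^ 2 = 1) (hu : 0 < k * u) (huk : u ≠ k) :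
    0 < (u - k) * (u ^ 3 - u) := by
  rw [cube_sub_self_eq hk]
  have := sub_ne_zero.2 huk
  positivity

lemma alpha_pos {γ k l x y : ℝ} (hγ : 0 < γ) (hk : k ^ 2 = 1) (hl : l ^ 2 = 1)
    (hx : 0 < k * x) (hy : 0 < l * y) (hne : (x, y) ≠ (k, l)) :
    0 < γ * (y ^ 3 - y) * (y - l) - (x - k) * -(x ^ 3 - x) := by
  have hSterm := sub_mul_cube_sub_self_nonneg hl hy
  have hCterm := sub_mul_cube_sub_self_nonneg hk hx
  by_cases hxk : x = k
  · have hyl : y ≠ l := fun hyl => hne (by rw [hxk, hyl])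
    nlinarith [mul_pos hγ (sub_mul_cube_sub_self_pos hl hy hyl)]
  · nlinarith [sub_mul_cube_sub_self_pos hk hx hxk, mul_nonneg hγ.le hSterm]

theorem alpha_pos_of_energy_mem_Ioo {γ k l : ℝ} {C S : ℝ → ℝ} (hγ₀ : 0 < γ) (hγ₁ : γ ≤ 1)
    (hk : k ^ 2 = 1) (hl : l ^ 2 = 1)
    (hC : ∀ φ, HasDerivAt C (γ * (S φ ^ 3 - S φ)) φ)
    (hS : ∀ φ, HasDerivAt S (-(C φ ^ 3 - C φ)) φ)
    (hkC : 0 < k * C 0) (hlS : 0 < l * S 0)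
    (hE : energy γ (C 0) (S 0) ∈ Ioo (-(1 + γ) / 4) (-1 / 4)) (φ : ℝ) :
    0 < deriv C φ * (S φ - l) - (C φ - k) * deriv S φ := by
  have hEφ : ∀ ψ, energy γ (C ψ) (S ψ) ∈ Ioo (-(1 + γ) / 4) (-1 / 4) := fun ψ =>
    energy_eq_of_hasDerivAt hC hS ψ 0 ▸ hE
  have hC_ne : ∀ ψ, k * C ψ ≠ 0 := fun ψ h => by
    have := (hEφ ψ).2
    rw [(mul_eq_zero.1 h).resolve_left (by rintro rfl; norm_num at hk)] at this
    linarith [neg_quarter_le_energy_zero_left hγ₀.le hγ₁ (S ψ)]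
  have hS_ne : ∀ ψ, l * S ψ ≠ 0 := fun ψ h => by
    have := (hEφ ψ).2
    rw [(mul_eq_zero.1 h).resolve_left (by rintro rfl; norm_num at hl)] at this
    linarith [neg_quarter_le_energy_zero_right γ (C ψ)]
  have hne : (C φ, S φ) ≠ (k, l) := fun h => by
    have := (hEφ φ).1
    rw [(Prod.mk.inj h).1, (Prod.mk.inj h).2, energy_sq_eq_one hk hl] at this
    exact lt_irrefl _ this
  have hCcont : Continuous C := continuous_iff_continuousAt.2 fun ψ => (hC ψ).continuousAt
  have hScont : Continuous S := continuous_iff_continuousAt.2 fun ψ => (hS ψ).continuousAt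
  rw [(hC φ).deriv, (hS φ).deriv]
  exact alpha_pos hγ₀ hk hl (pos_of_continuous_of_ne_zero (hCcont.const_mul k) hkC hC_ne φ)
    (pos_of_continuous_of_ne_zero (hScont.const_mul l) hlS hS_ne φ) hne

/-- the monotonicity indicator
`α_{kl}(φ) = C'(φ)(S(φ) − l) − (C(φ) − k)S'(φ)` is positive along any
class-2 cycle (`k, l ∈ {−1,1}`, `kb ∈ (1, r^s)`). -/
theorem alpha_positive_class_two
    (γ : ℝ) (hγ : γ ∈ Set.Ioc (0 : ℝ) 1)
    (k l b : ℝ) (hk : k = -1 ∨ k = 1) (hl : l = -1 ∨ l = 1)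
    (hb : k * b ∈ Set.Ioo 1 (Real.sqrt (1 + Real.sqrt γ)))
    (C S : ℝ → ℝ)
    (hC : ∀ φ : ℝ, HasDerivAt C (γ * (S φ ^ 3 - S φ)) φ)
    (hS : ∀ φ : ℝ, HasDerivAt S (-(C φ ^ 3 - C φ)) φ)
    (hC0 : C 0 = b) (hS0 : S 0 = l) :
    ∀ φ : ℝ, 0 < deriv C φ * (S φ - l) - (C φ - k) * deriv S φ := by
  have hk2 : k ^ 2 = 1 := by rcases hk with rfl | rfl <;> norm_num
  have hl2 : l ^ 2 = 1 := by rcases hl with rfl | rfl <;> norm_num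
  have hb2 : b ^ 2 = (k * b) ^ 2 := by rw [mul_pow, hk2, one_mul]
  have hb_lo : 1 < b ^ 2 := by nlinarith [hb.1]
  have hb_hi : b ^ 2 < 1 + √γ := by
    rw [hb2, ← Real.sq_sqrt (by positivity : (0 : ℝ) ≤ 1 + √γ)]
    exact pow_lt_pow_left₀ hb.2 (by linarith [hb.1]) two_ne_zero
  refine alpha_pos_of_energy_mem_Ioo hγ.1 hγ.2 hk2 hl2 hC hS (by rw [hC0]; linarith [hb.1])
    (by rw [hS0, ← sq, hl2]; exact one_pos) ?_
  rw [hC0, hS0, energy, V_of_sq_eq_one hl2]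
  constructor
  · linarith [neg_quarter_lt_V hb_lo.ne']
  · linarith [V_lt_of_sq_lt hγ.1.le hb_lo hb_hi]
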